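/- arXiv:math/9910127 — 5 statements merged into one kernel-verified Lean document; each statement's English description precedes it below -/
import Mathlib

section
/- Let p > q > 0 be coprime integers, let r₀, …, r_k be integers with rᵢ ≤ −2 for all i such that [r₀, …, r_k]⁻ = −p/q, and let p′, q′ be the unique integers with p q′ − q p′ = 1, 0 < p′ < p and 0 < q′ ≤ q. Then the value [r₀, …, r_{k−1}, r_k + 1]⁻ is well defined and equals −p′/q′. -/
/-- Negative continued fraction value `[r₀, …, r_k]⁻`:
`[r_k]⁻ = r_k` and `[r_j, …, r_k]⁻ = r_j − 1/[r_{j+1}, …, r_k]⁻`. -/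
def ncf : List ℤ → ℚ
  | [] => 0
  | [r] => (r : ℚ)
  | r :: rest => (r : ℚ) - 1 / ncf rest

/-- Well-definedness of the negative continued fraction: no tail value
`[r_j, …, r_k]⁻` with `j ≥ 1` is zero (so no division by zero occurs). -/
def NcfWF : List ℤ → Prop
  | [] => True
  | [_] => True
  | _ :: rest => ncf rest ≠ 0 ∧ NcfWF rest

/-- `(p′, q′)` is the Bezout successor of `(p, q)`:
`p q′ − q p′ = 1`, `0 < p′ < p`, `0 < q′ ≤ q`. -/
def BezoutNext (p q p' q' : ℤ) : Prop :=
  p * q' - q * p' = 1 ∧ 0 < p' ∧ p' < p ∧ 0 < q' ∧ q' ≤ q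

/-!
Writing `[r₀, …, r_k]⁻ = -p/q` in lowest terms, peeling off `r₀` turns the value `-a/b` of the
tail into `r₀ + b/a = -(-r₀ a - b)/a`, so `(p, q) = (-r₀ a - b, a)`, and the same linear map sends
the pair `(a', b')` of the modified tail to that of the modified list. This map preserves the
relation `p q' - q p' = 1` together with the inequalities, so by induction from `[r] ↦ [r + 1]`
the modified list has value `-p'/q'` for a Bezout successor `(p', q')` of `(p, q)`, which is unique.
-/

lemma ncf_cons (r : ℤ) {L : List ℤ} (hL : L ≠ []) : ncf (r :: L) = r - 1 / ncf L := by
  cases L with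
  | nil => exact absurd rfl hL
  | cons _ _ => rfl

lemma ncfWF_cons (r : ℤ) {L : List ℤ} (hL : L ≠ []) :
    NcfWF (r :: L) ↔ ncf L ≠ 0 ∧ NcfWF L := by
  cases L with
  | nil => exact absurd rfl hL
  | cons _ _ => rfl

lemma ncf_cons_of_eq_neg_div {L : List ℤ} (hL : L ≠ []) (r : ℤ) {a b : ℤ} (ha : a ≠ 0)
    (h : ncf L = -(a : ℚ) / b) : ncf (r :: L) = -((-r * a - b : ℤ) : ℚ) / (a : ℚ) := by
  have ha' : (a : ℚ) ≠ 0 := by exact_mod_cast ha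
  rw [ncf_cons r hL, h, neg_div, one_div_neg_eq_neg_one_div, one_div_div]
  push_cast
  field_simp
  ring

lemma List.modifyLast_eq_dropLast_append_getLast {α : Type*} (f : α → α) {l : List α}
    (hl : l ≠ []) : l.modifyLast f = l.dropLast ++ [f (l.getLast hl)] := by
  conv_lhs => rw [← List.dropLast_append_getLast hl]
  exact List.modifyLast_concat f _ _

lemma BezoutNext.isCoprime {p q p' q' : ℤ} (h : BezoutNext p q p' q') : IsCoprime p q :=
  ⟨q', -p', by linear_combination h.1⟩

lemma BezoutNext.unique {p q p₁ q₁ p₂ q₂ : ℤ} (h₁ : BezoutNext p q p₁ q₁)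
    (h₂ : BezoutNext p q p₂ q₂) : p₁ = p₂ ∧ q₁ = q₂ := by
  have hcop := h₁.isCoprime
  obtain ⟨e₁, hp₁, hp₁p, -, -⟩ := h₁
  obtain ⟨e₂, hp₂, hp₂p, -, -⟩ := h₂
  have hdvd : p ∣ p₁ - p₂ := hcop.dvd_of_dvd_mul_left ⟨q₁ - q₂, by linear_combination e₂ - e₁⟩
  have hp : p₁ = p₂ := by
    have := Int.eq_zero_of_abs_lt_dvd hdvd (by rw [abs_lt]; omega)
    omega
  subst hp
  exact ⟨rfl, by nlinarith⟩

lemma BezoutNext.cons {a b a' b' : ℤ} (r : ℤ) (hr : r ≤ -2) (hb : 0 < b) (hba : b < a)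
    (h : BezoutNext a b a' b') : BezoutNext (-r * a - b) a (-r * a' - b') a' := by
  obtain ⟨e, ha', ha'a, hb', hb'b⟩ := h
  have hb'a' : b' ≤ a' := by nlinarith
  have hdiff : a' - b' < a - b := by nlinarith
  refine ⟨by linear_combination e, by nlinarith, ?_, ha', ha'a.le⟩
  nlinarith [mul_nonneg (by omega : (0 : ℤ) ≤ -r - 2) (by omega : (0 : ℤ) ≤ a - a')]

lemma exists_bezoutNext_ncf_modifyLast {l : List ℤ} (hne : l ≠ []) (hl : ∀ r ∈ l, r ≤ -2) :
    ∃ p q p' q' : ℤ, 0 < q ∧ q < p ∧ BezoutNext p q p' q' ∧ ncf l = -(p : ℚ) / q ∧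
      NcfWF (l.modifyLast (· + 1)) ∧ ncf (l.modifyLast (· + 1)) = -(p' : ℚ) / q' := by
  induction l with
  | nil => exact absurd rfl hne
  | cons r L ih =>
    have hr : r ≤ -2 := hl r List.mem_cons_self
    rcases eq_or_ne L [] with rfl | hL
    · have hmod : [r].modifyLast (· + 1) = [r + 1] := List.modifyLast_concat _ r []
      refine ⟨-r, 1, -r - 1, 1, one_pos, by omega,
        ⟨by ring, by omega, by omega, one_pos, le_rfl⟩, ?_, ?_, ?_⟩ <;>
        simp [hmod, ncf, NcfWF, add_comm]
    · obtain ⟨a, b, a', b', hb, hba, hB, hv, hwf, hv'⟩ :=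
        ih hL fun x hx => hl x (List.mem_cons_of_mem r hx)
      have hmod : (r :: L).modifyLast (· + 1) = r :: L.modifyLast (· + 1) :=
        List.modifyLast_append_of_right_ne_nil _ [r] L hL
      have hmodne : L.modifyLast (· + 1) ≠ [] := by
        simp [List.modifyLast_eq_dropLast_append_getLast _ hL]
      have hB' := hB.cons r hr hb hba
      refine ⟨-r * a - b, a, -r * a' - b', a', by omega, by nlinarith, hB',
        ncf_cons_of_eq_neg_div hL r (by omega) hv, ?_, ?_⟩
      · rw [hmod, ncfWF_cons r hmodne, hv']
        refine ⟨div_ne_zero (neg_ne_zero.2 ?_) ?_, hwf⟩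
        · exact_mod_cast hB.2.1.ne'
        · exact_mod_cast hB.2.2.2.1.ne'
      · rw [hmod]
        exact ncf_cons_of_eq_neg_div hmodne r hB.2.1.ne' hv'

theorem stmt4_general (p q : ℤ) (hq : 0 < q) (hco : Int.gcd p q = 1)
    (l : List ℤ) (hne : l ≠ []) (hl : ∀ r ∈ l, r ≤ -2)
    (hval : ncf l = -(p : ℚ) / (q : ℚ))
    (p' q' : ℤ) (hb : BezoutNext p q p' q') :
    NcfWF (l.dropLast ++ [l.getLast hne + 1]) ∧
    ncf (l.dropLast ++ [l.getLast hne + 1]) = -(p' : ℚ) / (q' : ℚ) := by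
  obtain ⟨P, Q, P', Q', hQ, -, hB, hv, hwf, hv'⟩ := exists_bezoutNext_ncf_modifyLast hne hl
  obtain ⟨rfl, rfl⟩ : p = P ∧ q = Q := by
    refine Rat.div_int_inj hq hQ hco (Int.isCoprime_iff_gcd_eq_one.1 hB.isCoprime) ?_
    rw [← neg_inj, ← neg_div, ← neg_div, ← hval, hv]
  obtain ⟨rfl, rfl⟩ := hb.unique hB
  rw [← List.modifyLast_eq_dropLast_append_getLast (· + 1) hne]
  exact ⟨hwf, hv'⟩

/-- If `[r₀, …, r_k]⁻ = −p/q` with all `rᵢ ≤ −2`, and `p′, q′` are the unique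
integers with `p q′ − q p′ = 1`, `0 < p′ < p`, `0 < q′ ≤ q`, then
`[r₀, …, r_{k−1}, r_k + 1]⁻` is well defined and equals `−p′/q′`. -/
theorem stmt4 (p q : ℤ) (hq : 0 < q) (hqp : q < p) (hco : Int.gcd p q = 1)
    (l : List ℤ) (hne : l ≠ []) (hl : ∀ r ∈ l, r ≤ -2)
    (hwf : NcfWF l) (hval : ncf l = -(p : ℚ) / (q : ℚ))
    (p' q' : ℤ) (hb : BezoutNext p q p' q') :
    NcfWF (l.dropLast ++ [l.getLast hne + 1]) ∧
    ncf (l.dropLast ++ [l.getLast hne + 1]) = -(p' : ℚ) / (q' : ℚ) :=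
  stmt4_general p q hq hco l hne hl hval p' q' hb
end

section
/- Let p > q > 0 be coprime integers with Bezout chain (p₀, q₀), …, (p_n, q_n). Then the sequence of rationals −p₀/q₀, −p₁/q₁, …, −p_n/q_n is a path in the Farey graph from −p/q to −1 all of whose vertices lie in the closed interval [−p/q, −1]. Moreover, every path in the Farey graph from −p/q to −1 all of whose vertices lie in [−p/q, −1] has length at least n, and the unique such path of length n is the one above. -/
/-- `P 0 = (p, q), …, P n = (1, 1)` is the Bezout chain of `(p, q)`: each step
is the Bezout successor, and `(1, 1)` is reached exactly at step `n`. -/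
def IsBezoutChain (p q : ℤ) (n : ℕ) (P : ℕ → ℤ × ℤ) : Prop :=
  P 0 = (p, q) ∧ P n = (1, 1) ∧ (∀ i < n, P i ≠ (1, 1)) ∧
  ∀ i < n, BezoutNext (P i).1 (P i).2 (P (i + 1)).1 (P (i + 1)).2

/-- Two distinct rationals `a/b` and `c/d` (in lowest terms, `b, d > 0`) are
adjacent in the Farey graph iff `|a d − b c| = 1`. -/
def FareyAdj (x y : ℚ) : Prop :=
  x ≠ y ∧ (x.num * (y.den : ℤ) - y.num * (x.den : ℤ)).natAbs = 1

/-- The chainSlope `−pᵢ/qᵢ` associated to the `i`-th pair of a chain. -/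
def chainSlope (P : ℕ → ℤ × ℤ) (i : ℕ) : ℚ :=
  -((P i).1 : ℚ) / ((P i).2 : ℚ)

open Finset

def fareyDet (x y : ℚ) : ℤ := y.num * x.den - x.num * y.den

lemma fareyDet_pos_iff {x y : ℚ} : 0 < fareyDet x y ↔ x < y := by
  rw [Rat.lt_iff, fareyDet, sub_pos]

lemma fareyAdj_of_fareyDet_eq_one {x y : ℚ} (h : fareyDet x y = 1) : FareyAdj x y := by
  refine ⟨(fareyDet_pos_iff.mp (by omega)).ne, ?_⟩
  unfold fareyDet at h
  rw [show x.num * y.den - y.num * x.den = -1 by linarith]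
  rfl

lemma FareyAdj.fareyDet_eq_one {x y : ℚ} (h : FareyAdj x y) (hxy : x < y) :
    fareyDet x y = 1 := by
  have hpos := fareyDet_pos_iff.mpr hxy
  have habs := h.2
  unfold fareyDet at hpos ⊢
  omega

lemma fareyDet_mul_fareyDet (r u s v : ℚ) :
    fareyDet r s * fareyDet u v = fareyDet r u * fareyDet s v + fareyDet r v * fareyDet u s := by
  unfold fareyDet
  ring

lemma FareyAdj.not_cross {r u s v : ℚ} (hrs : FareyAdj r s) (huv : FareyAdj u v)
    (hru : r < u) (hus : u < s) (hsv : s < v) : False := by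
  -- The Plücker relation would write `1 * 1` as a sum of two products of positive integers.
  have h := fareyDet_mul_fareyDet r u s v
  rw [hrs.fareyDet_eq_one (hru.trans hus), huv.fareyDet_eq_one (hus.trans hsv)] at h
  have h₁ := fareyDet_pos_iff.mpr hru
  have h₂ := fareyDet_pos_iff.mpr hsv
  have h₃ := fareyDet_pos_iff.mpr ((hru.trans hus).trans hsv)
  have h₄ := fareyDet_pos_iff.mpr hus
  nlinarith

lemma exists_eq_add_smul_of_fareyDet_eq {x y z : ℚ} (h : fareyDet x y = fareyDet x z) :
    ∃ t : ℤ, z.num = y.num + t * x.num ∧ (z.den : ℤ) = y.den + t * x.den := by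
  unfold fareyDet at h
  have hcop : IsCoprime (x.den : ℤ) x.num := x.isCoprime_num_den.symm
  obtain ⟨t, ht⟩ : (x.den : ℤ) ∣ z.den - y.den :=
    hcop.dvd_of_dvd_mul_left ⟨z.num - y.num, by linear_combination h⟩
  have hden : (x.den : ℤ) ≠ 0 := by exact_mod_cast x.den_nz
  refine ⟨t, ?_, by linear_combination ht⟩
  apply mul_left_cancel₀ hden
  linear_combination -h + x.num * ht

/-- Writing `z = y + t • x` on numerator–denominator vectors, `y < z` would force `t < 0` and
then `0 < z.num`. -/
lemma le_of_fareyDet_eq_one_of_num_lt {x y z : ℚ} (hxy : fareyDet x y = 1)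
    (hxz : fareyDet x z = 1) (hx : x ≤ 0) (hz : z ≤ 0) (hnum : x.num < y.num) : z ≤ y := by
  obtain ⟨t, ht_num, ht_den⟩ := exists_eq_add_smul_of_fareyDet_eq (hxy.trans hxz.symm)
  by_contra! hyz
  have hyz_det : fareyDet y z = -t := by
    unfold fareyDet at hxy ⊢
    rw [ht_num, ht_den]
    linear_combination -t * hxy
  have ht : t < 0 := by linarith [fareyDet_pos_iff.mpr hyz]
  have hx_num := Rat.num_nonpos.mpr hx
  have hz_num := Rat.num_nonpos.mpr hz
  nlinarith

namespace IsBezoutChain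

variable {p q : ℤ} {n : ℕ} {P : ℕ → ℤ × ℤ} {i : ℕ}

lemma snd_pos (h : IsBezoutChain p q n P) (hi : i ≤ n) : 0 < (P i).2 := by
  rcases hi.lt_or_eq with hi | rfl
  · obtain ⟨-, -, -, hpos, hle⟩ := h.2.2.2 i hi
    exact hpos.trans_le hle
  · simp [h.2.1]

lemma isCoprime (h : IsBezoutChain p q n P) (hi : i ≤ n) : IsCoprime (P i).1 (P i).2 := by
  rcases hi.lt_or_eq with hi | rfl
  · obtain ⟨hdet, -⟩ := h.2.2.2 i hi
    exact ⟨(P (i + 1)).2, -(P (i + 1)).1, by linear_combination hdet⟩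
  · rw [h.2.1]
    exact isCoprime_one_left

lemma num_den_chainSlope (h : IsBezoutChain p q n P) (hi : i ≤ n) :
    (chainSlope P i).num = -(P i).1 ∧ ((chainSlope P i).den : ℤ) = (P i).2 := by
  have hcop : Nat.Coprime (-(P i).1).natAbs (P i).2.natAbs := by
    rw [Int.natAbs_neg]
    exact Int.isCoprime_iff_gcd_eq_one.mp (h.isCoprime hi)
  have hslope : chainSlope P i = ((-(P i).1 : ℤ) : ℚ) / ((P i).2 : ℚ) := by
    rw [chainSlope, Int.cast_neg]
  rw [hslope]
  exact ⟨Rat.num_div_eq_of_coprime (h.snd_pos hi) hcop,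
    Rat.den_div_eq_of_coprime (h.snd_pos hi) hcop⟩

lemma fareyDet_chainSlope_succ (h : IsBezoutChain p q n P) (hi : i < n) :
    fareyDet (chainSlope P i) (chainSlope P (i + 1)) = 1 := by
  obtain ⟨hdet, -⟩ := h.2.2.2 i hi
  obtain ⟨hnum, hden⟩ := h.num_den_chainSlope hi.le
  obtain ⟨hnum', hden'⟩ := h.num_den_chainSlope hi
  rw [fareyDet, hnum, hden, hnum', hden']
  linear_combination hdet

lemma strictMonoOn_chainSlope (h : IsBezoutChain p q n P) :
    StrictMonoOn (chainSlope P) (Set.Iic n) :=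
  strictMonoOn_Iic_of_lt_succ fun i hi => by
    rw [Order.succ_eq_add_one, ← fareyDet_pos_iff, h.fareyDet_chainSlope_succ hi]
    exact one_pos

lemma chainSlope_zero (h : IsBezoutChain p q n P) : chainSlope P 0 = -(p : ℚ) / (q : ℚ) := by
  simp [chainSlope, h.1]

lemma chainSlope_last (h : IsBezoutChain p q n P) : chainSlope P n = -1 := by
  simp [chainSlope, h.2.1]

lemma not_chainSlope_le_lt_lt (h : IsBezoutChain p q n P) (hi : i < n) {y z : ℚ}
    (hyz : FareyAdj y z) (hiy : chainSlope P i ≤ y) (hy : y < chainSlope P (i + 1))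
    (hz : chainSlope P (i + 1) < z) (hz0 : z ≤ 0) : False := by
  have hdet := h.fareyDet_chainSlope_succ hi
  rcases hiy.lt_or_eq with hiy | rfl
  · exact (fareyAdj_of_fareyDet_eq_one hdet).not_cross hyz hiy hy hz
  · obtain ⟨-, hp'pos, hp'p, -⟩ := h.2.2.2 i hi
    obtain ⟨hnum, -⟩ := h.num_den_chainSlope hi.le
    obtain ⟨hnum', -⟩ := h.num_den_chainSlope hi
    refine (le_of_fareyDet_eq_one_of_num_lt hdet (hyz.fareyDet_eq_one (hy.trans hz))
      ?_ hz0 ?_).not_gt hz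
    · rw [← Rat.num_nonpos, hnum]
      linarith
    · rw [hnum, hnum']
      linarith

lemma chainSlope_le_or_le (h : IsBezoutChain p q n P) {y z : ℚ} (hyz : FareyAdj y z)
    (hy : chainSlope P 0 ≤ y) (hz : z ≤ 0) :
    ∀ k ≤ n, chainSlope P k ≤ y ∨ z ≤ chainSlope P k := by
  intro k
  induction k with
  | zero => exact fun _ => Or.inl hy
  | succ k ih =>
    intro hk
    rcases ih (by omega) with hky | hzk
    · by_contra! hcon
      exact h.not_chainSlope_le_lt_lt hk hyz hky hcon.1 hcon.2 hz
    · exact Or.inr (hzk.trans (h.strictMonoOn_chainSlope.monotoneOn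
        (Set.mem_Iic.mpr (by omega)) (Set.mem_Iic.mpr hk) (by omega)))

end IsBezoutChain

section countBelow

variable {α : Type*} [LinearOrder α] {s : ℕ → α} {n : ℕ}

def countBelow (s : ℕ → α) (n : ℕ) (x : α) : ℕ := #{k ∈ range (n + 1) | s k < x}

lemma countBelow_le (s : ℕ → α) (n : ℕ) (x : α) : countBelow s n x ≤ n + 1 :=
  (card_filter_le _ _).trans (card_range _).le

lemma lt_countBelow_iff (hs : MonotoneOn s (Set.Iic n)) {k : ℕ} (hk : k ≤ n) {x : α} :
    k < countBelow s n x ↔ s k < x := by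
  constructor
  · intro hlt
    by_contra! hxk
    have hsub : {j ∈ range (n + 1) | s j < x} ⊆ range k := fun j hj => by
      simp only [mem_filter, mem_range] at hj ⊢
      by_contra! hkj
      exact (hj.2.trans_le hxk).not_ge
        (hs (Set.mem_Iic.mpr hk) (Set.mem_Iic.mpr (by omega)) hkj)
    have := card_le_card hsub
    rw [card_range] at this
    exact absurd hlt (not_lt.mpr this)
  · intro hkx
    have hsub : range (k + 1) ⊆ {j ∈ range (n + 1) | s j < x} := fun j hj => by
      simp only [mem_filter, mem_range] at hj ⊢
      exact ⟨by omega, (hs (Set.mem_Iic.mpr (by omega)) (Set.mem_Iic.mpr hk)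
        (by omega)).trans_lt hkx⟩
    have := card_le_card hsub
    rwa [card_range] at this

lemma countBelow_apply (hs : StrictMonoOn s (Set.Iic n)) {k : ℕ} (hk : k ≤ n) :
    countBelow s n (s k) = k := by
  rw [countBelow]
  convert card_range k using 2
  ext j
  simp only [mem_filter, mem_range]
  constructor
  · rintro ⟨hj, hjk⟩
    exact (hs.lt_iff_lt (Set.mem_Iic.mpr (by omega)) (Set.mem_Iic.mpr hk)).mp hjk
  · intro hjk
    exact ⟨by omega, (hs.lt_iff_lt (Set.mem_Iic.mpr (by omega)) (Set.mem_Iic.mpr hk)).mpr hjk⟩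

lemma countBelow_le_add_one (hs : StrictMonoOn s (Set.Iic n)) {y z : α}
    (hsep : ∀ k ≤ n, s k ≤ y ∨ z ≤ s k) : countBelow s n z ≤ countBelow s n y + 1 := by
  by_contra! hlt
  set k := countBelow s n y
  have hkn : k + 1 ≤ n := by have := countBelow_le s n z; omega
  have hz : s (k + 1) < z := (lt_countBelow_iff hs.monotoneOn hkn).mp hlt
  have hy : y ≤ s k := not_lt.mp fun h =>
    lt_irrefl k ((lt_countBelow_iff hs.monotoneOn (by omega)).mpr h)
  have hk : s k < s (k + 1) :=
    hs (Set.mem_Iic.mpr (by omega)) (Set.mem_Iic.mpr hkn) (Nat.lt_succ_self k)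
  rcases hsep (k + 1) hkn with h | h
  · exact (hy.trans_lt hk).not_ge h
  · exact hz.not_ge h

lemma apply_eq_of_countBelow_eq (hs : MonotoneOn s (Set.Iic n)) {x x' : α} {i : ℕ}
    (hx : countBelow s n x = i) (hx' : countBelow s n x' = i + 1) (hsep : s i ≤ x ∨ x' ≤ s i) :
    s i = x := by
  have hi : i ≤ n := by have := countBelow_le s n x'; omega
  have hle : x ≤ s i := not_lt.mp fun h => by
    have := (lt_countBelow_iff hs hi).mpr h
    omega
  have hlt : s i < x' := (lt_countBelow_iff hs hi).mp (by omega)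
  rcases hsep with h | h
  · exact le_antisymm h hle
  · exact absurd h hlt.not_ge

end countBelow

lemma Nat.le_add_of_forall_succ_le_add_one {a : ℕ → ℕ} {m : ℕ}
    (h : ∀ i < m, a (i + 1) ≤ a i + 1) (i d : ℕ) (hid : i + d ≤ m) : a (i + d) ≤ a i + d := by
  induction d with
  | zero => simp
  | succ d ih =>
    have := h (i + d) (by omega)
    have := ih (by omega)
    rw [← add_assoc]
    omega

theorem stmt6_general (p q : ℤ)
    (n : ℕ) (P : ℕ → ℤ × ℤ) (hchain : IsBezoutChain p q n P) :
    (∀ i < n, FareyAdj (chainSlope P i) (chainSlope P (i + 1))) ∧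
    (∀ i ≤ n, -(p : ℚ) / (q : ℚ) ≤ chainSlope P i ∧ chainSlope P i ≤ -1) ∧
    (∀ (m : ℕ) (f : ℕ → ℚ),
      f 0 = -(p : ℚ) / (q : ℚ) → f m = -1 →
      (∀ i < m, FareyAdj (f i) (f (i + 1))) →
      (∀ i ≤ m, -(p : ℚ) / (q : ℚ) ≤ f i ∧ f i ≤ -1) →
      n ≤ m ∧ (m = n → ∀ i ≤ n, f i = chainSlope P i)) := by
  have hs := hchain.strictMonoOn_chainSlope
  refine ⟨fun i hi => fareyAdj_of_fareyDet_eq_one (hchain.fareyDet_chainSlope_succ hi),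
    fun i hi => ?_, ?_⟩
  · rw [← hchain.chainSlope_zero, ← hchain.chainSlope_last]
    exact ⟨hs.monotoneOn (Set.mem_Iic.mpr n.zero_le) hi i.zero_le,
      hs.monotoneOn hi (Set.mem_Iic.mpr le_rfl) hi⟩
  intro m f hf0 hfm hfadj hfbox
  set g := countBelow (chainSlope P) n
  have hg0 : g (f 0) = 0 := by
    rw [hf0, ← hchain.chainSlope_zero]
    exact countBelow_apply hs n.zero_le
  have hgm : g (f m) = n := by
    rw [hfm, ← hchain.chainSlope_last]
    exact countBelow_apply hs le_rfl
  have hsep : ∀ i < m, ∀ k ≤ n, chainSlope P k ≤ f i ∨ f (i + 1) ≤ chainSlope P k :=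
    fun i hi => hchain.chainSlope_le_or_le (hfadj i hi)
      (hchain.chainSlope_zero ▸ (hfbox i hi.le).1) ((hfbox (i + 1) hi).2.trans (by norm_num))
  have hstep : ∀ i < m, g (f (i + 1)) ≤ g (f i) + 1 :=
    fun i hi => countBelow_le_add_one hs (hsep i hi)
  have hgrowth := Nat.le_add_of_forall_succ_le_add_one (a := fun i => g (f i)) hstep
  have hnm : n ≤ m := by simpa [hg0, hgm] using hgrowth 0 m (by omega)
  refine ⟨hnm, ?_⟩
  rintro rfl i hi
  have hg : ∀ i ≤ m, g (f i) = i := fun i hi => by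
    have hup := hgrowth 0 i (by omega)
    have hdown := hgrowth i (m - i) (by omega)
    rw [Nat.add_sub_cancel' hi, hgm] at hdown
    simp only [zero_add, hg0] at hup
    omega
  rcases hi.lt_or_eq with hi | rfl
  · exact (apply_eq_of_countBelow_eq hs.monotoneOn (hg i hi.le) (hg (i + 1) hi)
      (hsep i hi i hi.le)).symm
  · rw [hfm, hchain.chainSlope_last]

/-- The Bezout chain of a coprime pair `p > q > 0` yields a path in the Farey
graph from `−p/q` to `−1` whose vertices lie in `[−p/q, −1]`; every path in the
Farey graph from `−p/q` to `−1` with vertices in `[−p/q, −1]` has length at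
least `n`, and the unique such path of length `n` is this one. -/
theorem stmt6 (p q : ℤ) (hq : 0 < q) (hqp : q < p) (hco : Int.gcd p q = 1)
    (n : ℕ) (P : ℕ → ℤ × ℤ) (hchain : IsBezoutChain p q n P) :
    (∀ i < n, FareyAdj (chainSlope P i) (chainSlope P (i + 1))) ∧
    (∀ i ≤ n, -(p : ℚ) / (q : ℚ) ≤ chainSlope P i ∧ chainSlope P i ≤ -1) ∧
    (∀ (m : ℕ) (f : ℕ → ℚ),
      f 0 = -(p : ℚ) / (q : ℚ) → f m = -1 →
      (∀ i < m, FareyAdj (f i) (f (i + 1))) →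
      (∀ i ≤ m, -(p : ℚ) / (q : ℚ) ≤ f i ∧ f i ≤ -1) →
      n ≤ m ∧ (m = n → ∀ i ≤ n, f i = chainSlope P i)) :=
  stmt6_general p q n P hchain
end

section
/- Let p > q > 0 be coprime integers, let n be the length of the Bezout chain of (p, q), and let r₀, …, r_k be integers with rᵢ ≤ −2 for all i and [r₀, …, r_k]⁻ = −p/q. Then n = (−r₀ − 1) + Σ_{i=1}^{k} (−rᵢ − 2). -/
/-!
Put `aᵢ = -rᵢ ≥ 2`, so that `p/q = [a₀, …, a_k]⁻` is a Hirzebruch–Jung expansion and `(p, q)` is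
the first column of `M(a₀) ⋯ M(a_k)` with `M(a) = !![a, -1; 1, 0]`. This product has determinant
`1`, and if its second column is `(-p', -q')` then `1 ≤ p' < p` and `0 ≤ q' < q`, so
`(p - p', q - q')` is the Bezout successor of `(p, q)`. It is the first column of the product for
`[a₀, …, a_k - 1]`, where a last entry `1` is absorbed by `[…, a, 1]⁻ = […, a - 1]⁻`. Each Bezout
step therefore lowers `(a₀ - 1) + Σ (aᵢ - 2)` by one, and the chain stops at `[1]`, which gives
`(1, 1)`.
-/

lemma ncf_cons_s7 (a : ℤ) {l : List ℤ} (hl : l ≠ []) : ncf (a :: l) = a - 1 / ncf l := by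
  cases l
  · contradiction
  · rfl

lemma ncf_map_neg (l : List ℤ) : ncf (l.map (-·)) = -ncf l := by
  induction l with
  | nil => simp [ncf]
  | cons a l ih =>
    rcases eq_or_ne l [] with rfl | hl
    · simp [ncf]
    · rw [List.map_cons, ncf_cons_s7 _ (by simpa using hl), ncf_cons_s7 a hl, ih]
      push_cast
      ring

open Matrix

def hjMat (a : ℤ) : Matrix (Fin 2) (Fin 2) ℤ := !![a, -1; 1, 0]

def cfMat (l : List ℤ) : Matrix (Fin 2) (Fin 2) ℤ := (l.map hjMat).prod

@[simp] lemma cfMat_nil : cfMat [] = 1 := rfl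

@[simp] lemma cfMat_cons (a : ℤ) (l : List ℤ) : cfMat (a :: l) = hjMat a * cfMat l := by
  simp [cfMat]

lemma cfMat_concat (l : List ℤ) (b : ℤ) : cfMat (l ++ [b]) = cfMat l * hjMat b := by
  simp [cfMat]

lemma det_cfMat (l : List ℤ) : (cfMat l).det = 1 := by
  induction l with
  | nil => simp
  | cons a l ih => rw [cfMat_cons, det_mul, ih, hjMat, det_fin_two_of]; ring

lemma isCoprime_cfMat (l : List ℤ) : IsCoprime (cfMat l 0 0) (cfMat l 1 0) :=
  ⟨cfMat l 1 1, -cfMat l 0 1, by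
    linear_combination (det_fin_two (cfMat l)).symm.trans (det_cfMat l)⟩

lemma cfMat_cons_apply_zero_zero (a : ℤ) (l : List ℤ) :
    cfMat (a :: l) 0 0 = a * cfMat l 0 0 - cfMat l 1 0 := by
  simp [mul_apply, Fin.sum_univ_two, hjMat, sub_eq_add_neg]

lemma cfMat_cons_apply_one_zero (a : ℤ) (l : List ℤ) : cfMat (a :: l) 1 0 = cfMat l 0 0 := by
  simp [mul_apply, Fin.sum_univ_two, hjMat]

lemma cfMat_concat_apply_zero (l : List ℤ) (b : ℤ) (i : Fin 2) :
    cfMat (l ++ [b]) i 0 = b * cfMat l i 0 + cfMat l i 1 := by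
  simp [cfMat_concat, mul_apply, Fin.sum_univ_two, hjMat, mul_comm]

lemma cfMat_concat_apply_one (l : List ℤ) (b : ℤ) (i : Fin 2) :
    cfMat (l ++ [b]) i 1 = -cfMat l i 0 := by
  simp [cfMat_concat, mul_apply, Fin.sum_univ_two, hjMat]

lemma cfMat_apply_bounds {l : List ℤ} (hl : ∀ a ∈ l, 2 ≤ a) (i : Fin 2) :
    -cfMat l i 1 < cfMat l i 0 ∧ (1 : Matrix (Fin 2) (Fin 2) ℤ) i 0 ≤ cfMat l i 0 := by
  induction l using List.reverseRecOn with
  | nil => fin_cases i <;> simp [one_apply]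
  | append_singleton l b ih =>
    have hb : 2 ≤ b := hl b (by simp)
    obtain ⟨h1, h2⟩ := ih fun a ha => hl a (by simp [ha])
    have h0 : 0 ≤ (1 : Matrix (Fin 2) (Fin 2) ℤ) i 0 := by fin_cases i <;> simp [one_apply]
    rw [cfMat_concat_apply_zero, cfMat_concat_apply_one]
    constructor <;> nlinarith

def IsHJList (l : List ℤ) : Prop := l ≠ [] ∧ ∀ a ∈ l, 2 ≤ a

/-- Writing `cfMat l = !![p, -p'; q, -q']`, this says `1 ≤ p' < p` and `0 ≤ q' < q`. -/
lemma IsHJList.cfMat_bounds {l : List ℤ} (hl : IsHJList l) :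
    1 ≤ -cfMat l 0 1 ∧ -cfMat l 0 1 < cfMat l 0 0 ∧
      0 ≤ -cfMat l 1 1 ∧ -cfMat l 1 1 < cfMat l 1 0 := by
  have h0 := (cfMat_apply_bounds hl.2 0).1
  have h1 := (cfMat_apply_bounds hl.2 1).1
  obtain ⟨l', b, rfl⟩ := (List.eq_nil_or_concat' l).resolve_left hl.1
  have hl' : ∀ a ∈ l', 2 ≤ a := fun a ha => hl.2 a (by simp [ha])
  have h0' := (cfMat_apply_bounds hl' 0).2
  have h1' := (cfMat_apply_bounds hl' 1).2
  simp only [cfMat_concat_apply_one, neg_neg, one_apply_eq, ne_eq, one_ne_zero,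
    not_false_eq_true, one_apply_ne] at h0 h1 h0' h1' ⊢
  exact ⟨h0', h0, h1', h1⟩

lemma IsHJList.ncf_eq {l : List ℤ} (hl : IsHJList l) :
    ncf l = cfMat l 0 0 / cfMat l 1 0 := by
  obtain ⟨hne, hl⟩ := hl
  induction l with
  | nil => contradiction
  | cons a l ih =>
    rcases eq_or_ne l [] with rfl | hne'
    · simp [ncf, hjMat]
    · have hl' : IsHJList l := ⟨hne', fun b hb => hl b (List.mem_cons_of_mem a hb)⟩
      obtain ⟨h1, h2, -⟩ := hl'.cfMat_bounds
      have hne0 : (cfMat l 0 0 : ℚ) ≠ 0 := by exact_mod_cast (by omega : cfMat l 0 0 ≠ 0)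
      rw [ncf_cons_s7 a hne', ih hne' hl'.2, cfMat_cons_apply_zero_zero, cfMat_cons_apply_one_zero]
      push_cast
      field_simp

/-- Decrement the last entry, absorbing a resulting last `1` by `[…, a, 1]⁻ = […, a - 1]⁻`. -/
def decrLast : List ℤ → List ℤ
  | [] => []
  | [a] => [a - 1]
  | a :: b :: l => if decrLast (b :: l) = [1] then [a - 1] else a :: decrLast (b :: l)

lemma decrLast_cons (a : ℤ) {l : List ℤ} (hl : l ≠ []) :
    decrLast (a :: l) = if decrLast l = [1] then [a - 1] else a :: decrLast l := by
  cases l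
  · contradiction
  · rfl

lemma hjMat_sub_one_mulVec (a : ℤ) : hjMat (a - 1) *ᵥ ![1, 0] = hjMat a *ᵥ ![1, 1] := by
  ext i; fin_cases i <;> simp [hjMat]; ring

lemma cfMat_decrLast_mulVec {l : List ℤ} (hl : l ≠ []) :
    cfMat (decrLast l) *ᵥ ![1, 0] = cfMat l *ᵥ ![1, 1] := by
  induction l with
  | nil => contradiction
  | cons a l ih =>
    rcases eq_or_ne l [] with rfl | hl'
    · simpa [decrLast] using hjMat_sub_one_mulVec a
    · rw [decrLast_cons a hl', cfMat_cons, ← mulVec_mulVec, ← ih hl']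
      split_ifs with h
      · have h1 : cfMat [1] *ᵥ ![1, 0] = ![1, 1] := by ext i; fin_cases i <;> simp [hjMat]
        rw [h, h1]
        simpa using hjMat_sub_one_mulVec a
      · rw [cfMat_cons, mulVec_mulVec]

lemma cfMat_decrLast_apply {l : List ℤ} (hl : l ≠ []) (i : Fin 2) :
    cfMat (decrLast l) i 0 = cfMat l i 0 + cfMat l i 1 := by
  simpa [mulVec, dotProduct, Fin.sum_univ_two] using congrFun (cfMat_decrLast_mulVec hl) i

lemma IsHJList.decrLast_eq_one_or {l : List ℤ} (hl : IsHJList l) :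
    decrLast l = [1] ∨ IsHJList (decrLast l) := by
  obtain ⟨hne, hl⟩ := hl
  induction l with
  | nil => contradiction
  | cons a l ih =>
    have ha : 2 ≤ a := hl a List.mem_cons_self
    have hsingle : [a - 1] = [1] ∨ IsHJList [a - 1] := by
      rcases ha.eq_or_lt with rfl | ha
      · simp
      · exact Or.inr ⟨by simp, by simp; omega⟩
    rcases eq_or_ne l [] with rfl | hl'
    · exact hsingle
    rw [decrLast_cons a hl']
    split_ifs with h
    · exact hsingle
    · obtain ⟨-, hl''⟩ := (ih hl' fun b hb => hl b (List.mem_cons_of_mem a hb)).resolve_left h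
      exact Or.inr ⟨by simp, by simpa [ha] using hl''⟩

def sliceCount (l : List ℤ) : ℤ := (l.map (· - 2)).sum + 1

lemma sliceCount_nil : sliceCount [] = 1 := rfl

lemma sliceCount_cons (a : ℤ) (l : List ℤ) : sliceCount (a :: l) = a - 2 + sliceCount l := by
  simp only [sliceCount, List.map_cons, List.sum_cons]
  ring

lemma sliceCount_decrLast {l : List ℤ} (hl : l ≠ []) :
    sliceCount (decrLast l) = sliceCount l - 1 := by
  induction l with
  | nil => contradiction
  | cons a l ih =>
    have hsingle : sliceCount [a - 1] = sliceCount [a] - 1 := by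
      simp only [sliceCount_cons, sliceCount_nil]
      ring
    rcases eq_or_ne l [] with rfl | hl'
    · exact hsingle
    have hih := ih hl'
    rw [decrLast_cons a hl', sliceCount_cons]
    split_ifs with h
    · rw [h, sliceCount_cons, sliceCount_nil] at hih
      rw [hsingle, sliceCount_cons, sliceCount_nil]
      linarith
    · rw [sliceCount_cons, hih]
      ring

lemma IsHJList.bezoutNext_decrLast {l : List ℤ} (hl : IsHJList l) :
    BezoutNext (cfMat l 0 0) (cfMat l 1 0) (cfMat (decrLast l) 0 0) (cfMat (decrLast l) 1 0) := by
  have hdet := det_cfMat l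
  rw [det_fin_two] at hdet
  obtain ⟨h0, h0', h1, h1'⟩ := hl.cfMat_bounds
  rw [cfMat_decrLast_apply hl.1, cfMat_decrLast_apply hl.1]
  exact ⟨by linear_combination hdet, by omega, by omega, by omega, by omega⟩

lemma BezoutNext.unique_s7 {p q a b c d : ℤ} (h : BezoutNext p q a b) (h' : BezoutNext p q c d) :
    a = c ∧ b = d := by
  obtain ⟨e, -, -, hb, hbq⟩ := h
  obtain ⟨e', -, -, hd, hdq⟩ := h'
  have hbd : b = d := by
    have hcop : IsCoprime q p := ⟨-a, b, by linear_combination e⟩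
    have hdvd : q ∣ b - d := hcop.dvd_of_dvd_mul_left ⟨a - c, by linear_combination e - e'⟩
    have := Int.eq_zero_of_abs_lt_dvd hdvd (by rw [abs_lt]; constructor <;> omega)
    omega
  subst hbd
  have : q * (a - c) = 0 := by linear_combination e' - e
  exact ⟨by simpa [sub_eq_zero, (hb.trans_le hbq).ne'] using this, rfl⟩

lemma IsBezoutChain.tail {p q p' q' : ℤ} {n : ℕ} {P : ℕ → ℤ × ℤ}
    (h : IsBezoutChain p q n P) (hnext : BezoutNext p q p' q') :
    ∃ m, n = m + 1 ∧ IsBezoutChain p' q' m (fun i => P (i + 1)) := by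
  obtain ⟨h0, hn, hne, hstep⟩ := h
  obtain ⟨m, rfl⟩ : ∃ m, n = m + 1 := by
    refine Nat.exists_eq_succ_of_ne_zero ?_
    rintro rfl
    have : p = 1 := congrArg Prod.fst (h0.symm.trans hn)
    obtain ⟨-, hp', hp'p, -⟩ := hnext
    omega
  have h1 := hstep 0 m.succ_pos
  rw [h0] at h1
  obtain ⟨hp, hq⟩ := h1.unique_s7 hnext
  exact ⟨m, rfl, Prod.ext hp hq, hn, fun i hi => hne (i + 1) (by omega),
    fun i hi => hstep (i + 1) (by omega)⟩

lemma IsBezoutChain.length_eq_zero {n : ℕ} {P : ℕ → ℤ × ℤ} (h : IsBezoutChain 1 1 n P) :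
    n = 0 := by
  by_contra hn
  exact h.2.2.1 0 (Nat.pos_of_ne_zero hn) h.1

theorem IsBezoutChain.length_eq_sliceCount {l : List ℤ} (hl : l = [1] ∨ IsHJList l) {n : ℕ}
    {P : ℕ → ℤ × ℤ} (h : IsBezoutChain (cfMat l 0 0) (cfMat l 1 0) n P) :
    (n : ℤ) = sliceCount l := by
  induction n using Nat.strong_induction_on generalizing l P with
  | _ n ih =>
    rcases hl with rfl | hl
    · norm_num [hjMat] at h
      simp [h.length_eq_zero, sliceCount_cons, sliceCount_nil]
    · obtain ⟨m, rfl, hm⟩ := h.tail hl.bezoutNext_decrLast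
      rw [Nat.cast_succ, ih m (by omega) hl.decrLast_eq_one_or hm, sliceCount_decrLast hl.1]
      ring

lemma sliceCount_ofFn (f : ℕ → ℤ) (k : ℕ) :
    sliceCount (List.ofFn fun i : Fin (k + 1) => f i) =
      (f 0 - 1) + ∑ i ∈ Finset.Icc 1 k, (f i - 2) := by
  simp [sliceCount, List.map_ofFn, List.sum_ofFn, ← Finset.Ico_add_one_right_eq_Icc,
    Finset.sum_Ico_eq_sum_range, Finset.sum_range, add_comm 1]
  ring

theorem stmt7_general (p q : ℤ) (hq : 0 < q) (hco : Int.gcd p q = 1)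
    (n : ℕ) (P : ℕ → ℤ × ℤ) (hchain : IsBezoutChain p q n P)
    (k : ℕ) (r : ℕ → ℤ) (hr : ∀ i ≤ k, r i ≤ -2)
    (hval : ncf (List.ofFn fun i : Fin (k + 1) => r i.1) = -(p : ℚ) / (q : ℚ)) :
    (n : ℤ) = (-r 0 - 1) + ∑ i ∈ Finset.Icc 1 k, (-r i - 2) := by
  set l := List.ofFn fun i : Fin (k + 1) => -r i
  have hl : IsHJList l := by
    refine ⟨by simp [l], ?_⟩
    simp only [l, List.mem_ofFn, forall_exists_index]
    rintro _ i rfl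
    linarith [hr i (by omega)]
  have hr_eq : (List.ofFn fun i : Fin (k + 1) => r i) = l.map (-·) := by
    simp [l, List.map_ofFn, Function.comp_def]
  rw [hr_eq, ncf_map_neg, hl.ncf_eq, neg_div, neg_inj] at hval
  obtain ⟨hp, hq'⟩ := Rat.div_int_inj (by linarith [hl.cfMat_bounds]) hq
    (Int.isCoprime_iff_gcd_eq_one.mp (isCoprime_cfMat l)) hco hval
  rw [← hp, ← hq'] at hchain
  rw [hchain.length_eq_sliceCount (Or.inr hl)]
  exact sliceCount_ofFn (fun i => -r i) k

/-- If `[r₀, …, r_k]⁻ = −p/q` with all `rᵢ ≤ −2`, then the length `n` of the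
Bezout chain of `(p, q)` equals `(−r₀ − 1) + Σ_{i=1}^{k} (−rᵢ − 2)`. -/
theorem stmt7 (p q : ℤ) (hq : 0 < q) (hqp : q < p) (hco : Int.gcd p q = 1)
    (n : ℕ) (P : ℕ → ℤ × ℤ) (hchain : IsBezoutChain p q n P)
    (k : ℕ) (r : ℕ → ℤ) (hr : ∀ i ≤ k, r i ≤ -2)
    (hval : ncf (List.ofFn fun i : Fin (k + 1) => r i.1) = -(p : ℚ) / (q : ℚ)) :
    (n : ℤ) = (-r 0 - 1) + ∑ i ∈ Finset.Icc 1 k, (-r i - 2) :=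
  stmt7_general p q hq hco n P hchain k r hr hval
end

section
/- Let p > q > 0 be coprime integers with Bezout chain (p₀, q₀), …, (p_n, q_n), and set dᵢ = p_{i−1} − pᵢ for 1 ≤ i ≤ n. If ε, ε′ : {1, …, n} → {+1, −1} satisfy Σ_{i=1}^{n} εᵢ dᵢ = Σ_{i=1}^{n} ε′ᵢ dᵢ, then for every integer v the number of indices i with dᵢ = v and εᵢ = +1 equals the number of indices i with dᵢ = v and ε′ᵢ = +1. -/
lemma telesc (g : ℕ → ℤ) (a : ℕ) : ∀ m, a ≤ m →
    ∑ j ∈ Finset.Icc (a+1) m, (g (j-1) - g j) = g a - g m := by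
  intro m
  induction m with
  | zero => intro h; interval_cases a; simp
  | succ m ih =>
    intro h
    rcases Nat.lt_or_ge a (m+1) with h1 | h1
    · have ha : a ≤ m := by omega
      rw [Finset.sum_Icc_succ_top (by omega), ih ha]
      simp only [Nat.add_sub_cancel]
      ring
    · have : a = m + 1 := by omega
      subst this
      simp

lemma sumpm (T : Finset ℕ) (e : ℕ → ℤ) (he : ∀ i ∈ T, e i = 1 ∨ e i = -1) :
    ∑ i ∈ T, e i = 2 * ((T.filter (fun i => e i = 1)).card : ℤ) - T.card := by
  rw [← Finset.sum_filter_add_sum_filter_not T (fun i => e i = 1)]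
  have h1 : ∑ i ∈ T.filter (fun i => e i = 1), e i = (T.filter (fun i => e i = 1)).card := by
    rw [Finset.sum_congr rfl (fun i hi => (Finset.mem_filter.mp hi).2)]; simp
  have h2 : ∑ i ∈ T.filter (fun i => ¬ e i = 1), e i
      = -((T.filter (fun i => ¬ e i = 1)).card : ℤ) := by
    have : ∀ i ∈ T.filter (fun i => ¬ e i = 1), e i = -1 := by
      intro i hi
      have := Finset.mem_filter.mp hi
      rcases he i this.1 with h | h
      · exact absurd h this.2
      · exact h
    rw [Finset.sum_congr rfl this]; simp
  rw [h1, h2]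
  have := Finset.card_filter_add_card_filter_not (s := T) (p := fun i => e i = 1)
  push_cast [← this]
  ring

lemma keystep (A a B b C c : ℤ) (h1 : A*b - a*B = 1) (h2 : B*c - b*C = 1)
    (hB : 0 < B) (hBA : B < A) (hC : 0 < C) (hCB : C < B) :
    B - C ≤ A - B ∧ (B - C < A - B → B < A - B) := by
  have hco : IsCoprime B b := ⟨-a, A, by linarith⟩
  have hdvd : B ∣ b * (A + C) := ⟨a + c, by linear_combination h1 - h2⟩
  have hdvd2 : B ∣ A + C := hco.dvd_of_dvd_mul_left hdvd
  obtain ⟨k, hk⟩ := hdvd2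
  have hk2 : 2 ≤ k := by nlinarith
  constructor
  · nlinarith
  · intro h
    have hk3 : 3 ≤ k := by nlinarith
    nlinarith

/-- With `dᵢ = p_{i−1} − pᵢ` along the Bezout chain of `(p, q)`: if two sign
choices `ε, ε′ : {1, …, n} → {±1}` give the same signed sum `Σ εᵢ dᵢ`, then for
every value `v` the number of indices `i` with `dᵢ = v` and `εᵢ = +1` is the
same for `ε` and `ε′`. -/
theorem stmt9 (p q : ℤ) (hq : 0 < q) (hqp : q < p) (hco : Int.gcd p q = 1)
    (n : ℕ) (P : ℕ → ℤ × ℤ) (hchain : IsBezoutChain p q n P)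
    (d : ℕ → ℤ) (hd : ∀ i, 1 ≤ i → i ≤ n → d i = (P (i - 1)).1 - (P i).1)
    (ε ε' : ℕ → ℤ)
    (hε : ∀ i ∈ Finset.Icc 1 n, ε i = 1 ∨ ε i = -1)
    (hε' : ∀ i ∈ Finset.Icc 1 n, ε' i = 1 ∨ ε' i = -1)
    (hsum : ∑ i ∈ Finset.Icc 1 n, ε i * d i = ∑ i ∈ Finset.Icc 1 n, ε' i * d i) :
    ∀ v : ℤ,
      ((Finset.Icc 1 n).filter (fun i => d i = v ∧ ε i = 1)).card =
      ((Finset.Icc 1 n).filter (fun i => d i = v ∧ ε' i = 1)).card := by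
  obtain ⟨hP0, hPn, hnontriv, hstep⟩ := hchain
  have hp1 : (P n).1 = 1 := by rw [hPn]
  have hdec : ∀ i < n, (P (i+1)).1 < (P i).1 := fun i hi => (hstep i hi).2.2.1
  have hpos : ∀ i < n, 0 < (P (i+1)).1 := fun i hi => (hstep i hi).2.1
  -- d is positive
  have hd_pos : ∀ i, 1 ≤ i → i ≤ n → 1 ≤ d i := by
    intro i h1 h2
    rw [hd i h1 h2]
    have h3 := hdec (i-1) (by omega)
    have hi1 : i - 1 + 1 = i := by omega
    rw [hi1] at h3
    omega
  -- telescoping sums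
  have htel : ∀ i, i ≤ n → ∑ j ∈ Finset.Icc (i+1) n, d j = (P i).1 - 1 := by
    intro i hi
    have h1 : ∑ j ∈ Finset.Icc (i+1) n, d j
        = ∑ j ∈ Finset.Icc (i+1) n, ((P (j-1)).1 - (P j).1) := by
      refine Finset.sum_congr rfl (fun j hj => ?_)
      have hj' := Finset.mem_Icc.mp hj
      exact hd j (by omega) hj'.2
    rw [h1, telesc (fun j => (P j).1) i n hi, hp1]
  -- monotonicity and superincreasing step
  have hkey : ∀ i, 1 ≤ i → i + 1 ≤ n →
      d (i+1) ≤ d i ∧ (d (i+1) < d i → (P i).1 < d i) := by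
    intro i h1 h2
    have e1 := hstep (i-1) (by omega)
    have hi1 : i - 1 + 1 = i := by omega
    rw [hi1] at e1
    have e2 := hstep i (by omega)
    obtain ⟨heq1, -, hlt1, -, -⟩ := e1
    obtain ⟨heq2, hpos2, hlt2, -, -⟩ := e2
    have hBpos : 0 < (P i).1 := lt_trans hpos2 hlt2
    have hk := keystep (P (i-1)).1 (P (i-1)).2 (P i).1 (P i).2 (P (i+1)).1 (P (i+1)).2
      heq1 heq2 hBpos hlt1 hpos2 hlt2
    rw [hd i h1 (by omega), hd (i+1) (by omega) h2]
    simpa using hk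
  -- global antitonicity
  have hanti : ∀ j k, 1 ≤ j → j ≤ k → k ≤ n → d k ≤ d j := by
    intro j k hj hjk hkn
    induction k with
    | zero => omega
    | succ m ih =>
      rcases Nat.lt_or_ge m (j) with h | h
      · have : j = m + 1 := by omega
        rw [this]
      · have h1 := (hkey m (by omega) (by omega)).1
        have h2 := ih (by omega) (by omega)
        linarith
  -- superincreasing per value
  have hsup : ∀ v : ℤ, (∃ i, i ∈ Finset.Icc 1 n ∧ d i = v) →
      ∑ i ∈ (Finset.Icc 1 n).filter (fun i => d i < v), d i < v := by
    intro v ⟨i0, hi0, hdi0⟩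
    have hi0' := Finset.mem_Icc.mp hi0
    set T := (Finset.Icc 1 n).filter (fun i => d i = v) with hT
    have hTne : T.Nonempty := ⟨i0, Finset.mem_filter.mpr ⟨hi0, hdi0⟩⟩
    set i1 := T.max' hTne with hi1def
    have hi1T : i1 ∈ T := T.max'_mem hTne
    have hi1m := Finset.mem_filter.mp hi1T
    have hi1' := Finset.mem_Icc.mp hi1m.1
    have hdv : d i1 = v := hi1m.2
    have hsub : (Finset.Icc 1 n).filter (fun i => d i < v) ⊆ Finset.Icc (i1+1) n := by
      intro j hj
      have hj' := Finset.mem_filter.mp hj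
      have hj'' := Finset.mem_Icc.mp hj'.1
      rw [Finset.mem_Icc]
      refine ⟨?_, hj''.2⟩
      by_contra hcon
      have : j ≤ i1 := by omega
      have := hanti j i1 (by omega) this hi1'.2
      rw [hdv] at this
      have := hj'.2
      linarith
    have hle : ∑ i ∈ (Finset.Icc 1 n).filter (fun i => d i < v), d i
        ≤ ∑ j ∈ Finset.Icc (i1+1) n, d j := by
      refine Finset.sum_le_sum_of_subset_of_nonneg hsub (fun j hj _ => ?_)
      have hj' := Finset.mem_Icc.mp hj
      have := hd_pos j (by omega) hj'.2
      linarith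
    rw [htel i1 hi1'.2] at hle
    rcases Nat.lt_or_ge i1 n with hcase | hcase
    · -- i1 < n : strict drop at i1
      have hdrop : d (i1+1) < d i1 := by
        rcases lt_or_eq_of_le ((hkey i1 hi1'.1 (by omega)).1) with h | h
        · exact h
        · exfalso
          have : i1 + 1 ∈ T := Finset.mem_filter.mpr
            ⟨Finset.mem_Icc.mpr ⟨by omega, by omega⟩, by rw [h, hdv]⟩
          have := Finset.le_max' T _ this
          omega
      have := (hkey i1 hi1'.1 (by omega)).2 hdrop
      rw [hdv] at this
      linarith
    · -- i1 = n
      have : i1 = n := by omega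
      rw [this, hp1] at hle
      have hv1 : 1 ≤ v := by rw [← hdv]; exact hd_pos i1 hi1'.1 hi1'.2
      linarith
  -- main argument
  intro v0
  by_contra hne0
  -- the set of "bad" indices
  set Bd := (Finset.Icc 1 n).filter (fun i =>
    ¬ ((Finset.Icc 1 n).filter (fun j => d j = d i ∧ ε j = 1)).card =
      ((Finset.Icc 1 n).filter (fun j => d j = d i ∧ ε' j = 1)).card) with hBdef
  have hBne : Bd.Nonempty := by
    have hex : ∃ i ∈ Finset.Icc 1 n, d i = v0 := by
      by_contra hno
      push_neg at hno
      apply hne0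
      have e1 : (Finset.Icc 1 n).filter (fun j => d j = v0 ∧ ε j = 1) = ∅ :=
        Finset.filter_eq_empty_iff.mpr (fun j hj hc => hno j hj hc.1)
      have e2 : (Finset.Icc 1 n).filter (fun j => d j = v0 ∧ ε' j = 1) = ∅ :=
        Finset.filter_eq_empty_iff.mpr (fun j hj hc => hno j hj hc.1)
      rw [e1, e2]
    obtain ⟨i0, hi0, hd0⟩ := hex
    exact ⟨i0, Finset.mem_filter.mpr ⟨hi0, by simp only [hd0]; exact hne0⟩⟩
  set V := Bd.image d with hVdef
  have hVne : V.Nonempty := hBne.image d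
  set v := V.max' hVne with hvdef
  have hvV : v ∈ V := V.max'_mem hVne
  obtain ⟨iB, hiB, hdiB⟩ := Finset.mem_image.mp hvV
  have hiBm := Finset.mem_filter.mp hiB
  have hiB' := Finset.mem_Icc.mp hiBm.1
  have hv1 : 1 ≤ v := by rw [← hdiB]; exact hd_pos iB hiB'.1 hiB'.2
  have hbad : ¬ ((Finset.Icc 1 n).filter (fun j => d j = v ∧ ε j = 1)).card =
      ((Finset.Icc 1 n).filter (fun j => d j = v ∧ ε' j = 1)).card := by
    have := hiBm.2
    rwa [hdiB] at this
  have hgood : ∀ i ∈ Finset.Icc 1 n, v < d i →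
      ((Finset.Icc 1 n).filter (fun j => d j = d i ∧ ε j = 1)).card =
      ((Finset.Icc 1 n).filter (fun j => d j = d i ∧ ε' j = 1)).card := by
    intro i hi hlt
    by_contra hc
    have : i ∈ Bd := Finset.mem_filter.mpr ⟨hi, hc⟩
    have : d i ∈ V := Finset.mem_image_of_mem d this
    have := Finset.le_max' V _ this
    rw [← hvdef] at this
    linarith
  -- the zero signed sum
  have hzero : ∑ i ∈ Finset.Icc 1 n, (ε i - ε' i) * d i = 0 := by
    simp only [sub_mul, Finset.sum_sub_distrib, hsum, sub_self]
  -- split into three parts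
  have hsplit : ∑ i ∈ Finset.Icc 1 n, (ε i - ε' i) * d i
      = (∑ i ∈ (Finset.Icc 1 n).filter (fun i => v < d i), (ε i - ε' i) * d i)
      + (∑ i ∈ (Finset.Icc 1 n).filter (fun i => d i = v), (ε i - ε' i) * d i)
      + (∑ i ∈ (Finset.Icc 1 n).filter (fun i => d i < v), (ε i - ε' i) * d i) := by
    have e1 : (Finset.Icc 1 n).filter (fun a => ¬ v < d a ∧ d a = v)
        = (Finset.Icc 1 n).filter (fun i => d i = v) := by
      apply Finset.filter_congr
      intro i _
      constructor
      · intro h; exact h.2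
      · intro h; exact ⟨by omega, h⟩
    have e2 : (Finset.Icc 1 n).filter (fun a => ¬ v < d a ∧ ¬ d a = v)
        = (Finset.Icc 1 n).filter (fun i => d i < v) := by
      apply Finset.filter_congr
      intro i _
      constructor
      · intro h; omega
      · intro h; omega
    rw [← Finset.sum_filter_add_sum_filter_not (Finset.Icc 1 n) (fun i => v < d i),
      ← Finset.sum_filter_add_sum_filter_not
        ((Finset.Icc 1 n).filter (fun i => ¬ v < d i)) (fun i => d i = v),
      Finset.filter_filter, Finset.filter_filter, e1, e2, add_assoc]
  -- part with d i > v vanishes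
  have hhi : ∑ i ∈ (Finset.Icc 1 n).filter (fun i => v < d i), (ε i - ε' i) * d i = 0 := by
    set Shi := (Finset.Icc 1 n).filter (fun i => v < d i) with hShi
    rw [← Finset.sum_fiberwise_of_maps_to (g := d) (t := Shi.image d)
      (fun x hx => Finset.mem_image_of_mem d hx)]
    apply Finset.sum_eq_zero
    intro w hw
    obtain ⟨iw, hiw, hdw⟩ := Finset.mem_image.mp hw
    have hiw' := Finset.mem_filter.mp hiw
    have hvw : v < w := by rw [← hdw]; exact hiw'.2
    have hset : Shi.filter (fun i => d i = w) = (Finset.Icc 1 n).filter (fun i => d i = w) := by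
      rw [hShi, Finset.filter_filter]
      apply Finset.filter_congr
      intro i _
      constructor
      · intro h; exact h.2
      · intro h; exact ⟨by omega, h⟩
    rw [hset]
    have hterm : ∑ i ∈ (Finset.Icc 1 n).filter (fun i => d i = w), (ε i - ε' i) * d i
        = (∑ i ∈ (Finset.Icc 1 n).filter (fun i => d i = w), (ε i - ε' i)) * w := by
      rw [Finset.sum_mul]
      exact Finset.sum_congr rfl (fun i hi => by rw [(Finset.mem_filter.mp hi).2])
    rw [hterm]
    have hc := hgood iw hiw'.1 hiw'.2
    rw [hdw] at hc
    set T := (Finset.Icc 1 n).filter (fun i => d i = w) with hTdef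
    have hmem : ∀ i ∈ T, i ∈ Finset.Icc 1 n := fun i hi => (Finset.mem_filter.mp hi).1
    rw [Finset.sum_sub_distrib,
      sumpm T ε (fun i hi => hε i (hmem i hi)),
      sumpm T ε' (fun i hi => hε' i (hmem i hi))]
    rw [hTdef, Finset.filter_filter, Finset.filter_filter] at *
    rw [hc]
    ring
  -- part with d i = v
  set c1 := ((Finset.Icc 1 n).filter (fun j => d j = v ∧ ε j = 1)).card with hc1
  set c2 := ((Finset.Icc 1 n).filter (fun j => d j = v ∧ ε' j = 1)).card with hc2
  have heqp : ∑ i ∈ (Finset.Icc 1 n).filter (fun i => d i = v), (ε i - ε' i) * d i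
      = 2 * ((c1 : ℤ) - c2) * v := by
    have hterm : ∑ i ∈ (Finset.Icc 1 n).filter (fun i => d i = v), (ε i - ε' i) * d i
        = (∑ i ∈ (Finset.Icc 1 n).filter (fun i => d i = v), (ε i - ε' i)) * v := by
      rw [Finset.sum_mul]
      exact Finset.sum_congr rfl (fun i hi => by rw [(Finset.mem_filter.mp hi).2])
    rw [hterm]
    set T := (Finset.Icc 1 n).filter (fun i => d i = v) with hTdef
    have hmem : ∀ i ∈ T, i ∈ Finset.Icc 1 n := fun i hi => (Finset.mem_filter.mp hi).1
    rw [Finset.sum_sub_distrib,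
      sumpm T ε (fun i hi => hε i (hmem i hi)),
      sumpm T ε' (fun i hi => hε' i (hmem i hi))]
    rw [hTdef, Finset.filter_filter, Finset.filter_filter]
    rw [← hc1, ← hc2]
    ring
  -- part with d i < v is small
  have hlo : |∑ i ∈ (Finset.Icc 1 n).filter (fun i => d i < v), (ε i - ε' i) * d i|
      < 2 * v := by
    have h1 : |∑ i ∈ (Finset.Icc 1 n).filter (fun i => d i < v), (ε i - ε' i) * d i|
        ≤ ∑ i ∈ (Finset.Icc 1 n).filter (fun i => d i < v), |(ε i - ε' i) * d i| :=
      Finset.abs_sum_le_sum_abs _ _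
    have h2 : ∑ i ∈ (Finset.Icc 1 n).filter (fun i => d i < v), |(ε i - ε' i) * d i|
        ≤ ∑ i ∈ (Finset.Icc 1 n).filter (fun i => d i < v), 2 * d i := by
      refine Finset.sum_le_sum (fun i hi => ?_)
      have hi1 := (Finset.mem_filter.mp hi).1
      have hi2 := Finset.mem_Icc.mp hi1
      have hdp := hd_pos i hi2.1 hi2.2
      rw [abs_mul, abs_of_nonneg (by linarith : (0:ℤ) ≤ d i)]
      have : |ε i - ε' i| ≤ 2 := by
        rcases hε i hi1 with h | h <;> rcases hε' i hi1 with h' | h' <;>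
          rw [h, h'] <;> norm_num
      nlinarith
    have h3 : ∑ i ∈ (Finset.Icc 1 n).filter (fun i => d i < v), 2 * d i < 2 * v := by
      rw [← Finset.mul_sum]
      have := hsup v ⟨iB, hiBm.1, hdiB⟩
      linarith
    linarith
  -- conclusion
  rw [hsplit, hhi, heqp, zero_add] at hzero
  have hcne : (c1 : ℤ) ≠ c2 := fun h => hbad (by exact_mod_cast h)
  have habs : 1 ≤ |(c1 : ℤ) - c2| := by
    rcases lt_or_gt_of_ne hcne with h | h
    · rw [abs_of_neg (by linarith)]; omega
    · rw [abs_of_pos (by linarith)]; omega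
  have hbig : 2 * v ≤ |2 * ((c1 : ℤ) - c2) * v| := by
    rw [abs_mul, abs_mul, abs_of_nonneg (by norm_num : (0:ℤ) ≤ 2),
      abs_of_nonneg (by linarith : (0:ℤ) ≤ v)]
    nlinarith
  have : |2 * ((c1 : ℤ) - c2) * v| = |∑ i ∈ (Finset.Icc 1 n).filter (fun i => d i < v),
      (ε i - ε' i) * d i| := by
    rw [abs_eq_abs]
    right
    linarith
  rw [this] at hbig
  linarith
end

section
/- Let p > q > 0 be coprime integers, let r₀, …, r_k be integers with rᵢ ≤ −2 for all i and [r₀, …, r_k]⁻ = −p/q, and let p′, q′ be the unique integers with p q′ − q p′ = 1, 0 < p′ < p and 0 < q′ ≤ q. Let m be the length of the Bezout chain of (p′, q′) (with m = 0 when (p′, q′) = (1, 1)), and let d′ᵢ = p′_{i−1} − p′ᵢ for 1 ≤ i ≤ m be the differences of first coordinates along that chain. Then the number of distinct integers of the form Σ_{i=1}^{m} εᵢ d′ᵢ, as ε ranges over all functions {1, …, m} → {+1, −1} (this number being 1 when m = 0), equals |(r₀ + 1)(r₁ + 1) ⋯ (r_k + 1)|. -/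
/-!
Put `aⱼ = −rⱼ ≥ 2` and let `uⱼ = (Wⱼ, Yⱼ)` be the convergent vectors, `uⱼ₊₂ = aⱼ uⱼ₊₁ − uⱼ`, so
that `(p, q) = u_{k+2}`. The determinant identity `det (uⱼ₊₁, uⱼ) = −1` makes
`c uⱼ₊₁ − uⱼ ↦ (c − 1) uⱼ₊₁ − uⱼ` a Bezout step for `c ≥ 2`, and `uⱼ₊₁ − uⱼ = (aⱼ₋₁ − 1) uⱼ − uⱼ₋₁`.
So the Bezout chain of `(p′, q′) = u_{k+2} − u_{k+1}` has as differences `W_{t+1}` repeated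
`aₜ − 2` times, for `t = k, …, 0`. The differences after the block of `W_{t+1}` add up to
`W_{t+1} − W_t − 1 < W_{t+1}`, so each block multiplies the number of signed sums by `aₜ − 1`.
-/

/-- With initial values `0, 1` resp. `-1, 0`, the term of index `j + 2` is the numerator resp.
denominator of `a 0 - 1 / (a 1 - ⋯ - 1 / a j)`. -/
def cfRec (a : ℕ → ℤ) (x₀ x₁ : ℤ) : ℕ → ℤ
  | 0 => x₀
  | 1 => x₁
  | j + 2 => a j * cfRec a x₀ x₁ (j + 1) - cfRec a x₀ x₁ j

namespace cfRec

variable {a : ℕ → ℤ}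

theorem succ_eq_tail (a : ℕ → ℤ) (x₀ x₁ : ℤ) :
    ∀ j, cfRec a x₀ x₁ (j + 1) = cfRec (fun i => a (i + 1)) x₁ (a 0 * x₁ - x₀) j
  | 0 => rfl
  | 1 => rfl
  | j + 2 => by
    show a (j + 1) * _ - _ = a (j + 1) * _ - _
    rw [succ_eq_tail a x₀ x₁ j, succ_eq_tail a x₀ x₁ (j + 1)]

theorem mul_sub (a : ℕ → ℤ) (c x₀ x₁ y₀ y₁ : ℤ) :
    ∀ j, c * cfRec a x₀ x₁ j - cfRec a y₀ y₁ j = cfRec a (c * x₀ - y₀) (c * x₁ - y₁) j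
  | 0 => rfl
  | 1 => rfl
  | j + 2 => by
    simp only [cfRec]
    rw [← mul_sub a c x₀ x₁ y₀ y₁ j, ← mul_sub a c x₀ x₁ y₀ y₁ (j + 1)]
    ring

theorem casoratian (a : ℕ → ℤ) (x₀ x₁ y₀ y₁ : ℤ) (j : ℕ) :
    cfRec a x₀ x₁ (j + 1) * cfRec a y₀ y₁ j - cfRec a y₀ y₁ (j + 1) * cfRec a x₀ x₁ j
      = x₁ * y₀ - y₁ * x₀ := by
  induction j with
  | zero => rfl
  | succ j ih =>
    simp only [cfRec]
    linear_combination ih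

theorem le_and_lt_succ {x₀ x₁ : ℤ} (h₀ : -1 ≤ x₀) (h₀₁ : x₀ < x₁) {j : ℕ}
    (ha : ∀ t < j, 2 ≤ a t) : x₀ ≤ cfRec a x₀ x₁ j ∧ cfRec a x₀ x₁ j < cfRec a x₀ x₁ (j + 1) := by
  induction j with
  | zero => exact ⟨le_rfl, h₀₁⟩
  | succ j ih =>
    obtain ⟨hle, hlt⟩ := ih fun t ht => ha t (by omega)
    have h2 := ha j (by omega)
    refine ⟨by omega, ?_⟩
    show _ < a j * _ - _
    nlinarith

theorem num_nonneg_and_lt_succ {j : ℕ} (ha : ∀ t < j, 2 ≤ a t) :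
    0 ≤ cfRec a 0 1 j ∧ cfRec a 0 1 j < cfRec a 0 1 (j + 1) :=
  le_and_lt_succ (by norm_num) (by norm_num) ha

theorem neg_one_le_den_and_lt_succ {j : ℕ} (ha : ∀ t < j, 2 ≤ a t) :
    -1 ≤ cfRec a (-1) 0 j ∧ cfRec a (-1) 0 j < cfRec a (-1) 0 (j + 1) :=
  le_and_lt_succ (by norm_num) (by norm_num) ha

theorem num_pos {j : ℕ} (ha : ∀ t < j, 2 ≤ a t) : 0 < cfRec a 0 1 (j + 1) :=
  (num_nonneg_and_lt_succ ha).1.trans_lt (num_nonneg_and_lt_succ ha).2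

theorem den_pos {j : ℕ} (ha : ∀ t < j + 1, 2 ≤ a t) : 0 < cfRec a (-1) 0 (j + 2) := by
  have h₁ := neg_one_le_den_and_lt_succ (j := j) fun t ht => ha t (by omega)
  have h₂ : cfRec a (-1) 0 (j + 1) < cfRec a (-1) 0 (j + 2) := (neg_one_le_den_and_lt_succ ha).2
  omega

theorem num_den_det (a : ℕ → ℤ) (j : ℕ) :
    cfRec a 0 1 (j + 1) * cfRec a (-1) 0 j - cfRec a (-1) 0 (j + 1) * cfRec a 0 1 j = -1 := by
  simpa using casoratian a 0 1 (-1) 0 j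

end cfRec

theorem ncf_ofFn_eq (k : ℕ) (r : ℕ → ℤ) (hr : ∀ i ≤ k, r i ≤ -2) :
    ncf (List.ofFn fun i : Fin (k + 1) => r i)
      = -(cfRec (fun i => -r i) 0 1 (k + 2) / cfRec (fun i => -r i) (-1) 0 (k + 2) : ℚ) := by
  induction k generalizing r with
  | zero => simp [ncf, cfRec]
  | succ k ih =>
    rw [List.ofFn_succ, ncf.eq_3 _ _ (by simp)]
    simp only [Fin.val_succ, Fin.val_zero]
    rw [ih (fun i => r (i + 1)) fun i hi => hr (i + 1) (by omega),
      cfRec.succ_eq_tail _ _ _ (k + 2), cfRec.succ_eq_tail _ _ _ (k + 2),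
      show -r 0 * 0 - -1 = 1 by ring]
    set W := cfRec (fun i => -r (i + 1)) 0 1 (k + 2)
    set Y := cfRec (fun i => -r (i + 1)) (-1) 0 (k + 2)
    have hW : (W : ℚ) ≠ 0 := by
      exact_mod_cast (cfRec.num_pos fun t ht => by have := hr (t + 1) (by omega); omega).ne'
    have hnum : cfRec (fun i => -r (i + 1)) 1 (-r 0 * 1 - 0) (k + 2) = -r 0 * W - Y := by
      rw [cfRec.mul_sub]; congr 1; ring
    rw [hnum]
    push_cast
    field_simp
    ring

theorem eq_cfRec_of_ncf_eq {k : ℕ} {r : ℕ → ℤ} (hr : ∀ i ≤ k, r i ≤ -2) {p q : ℤ} (hq : 0 < q)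
    (hco : Int.gcd p q = 1) (hval : ncf (List.ofFn fun i : Fin (k + 1) => r i) = -(p : ℚ) / q) :
    p = cfRec (fun i => -r i) 0 1 (k + 2) ∧ q = cfRec (fun i => -r i) (-1) 0 (k + 2) := by
  set W := cfRec (fun i => -r i) 0 1 (k + 2)
  set Y := cfRec (fun i => -r i) (-1) 0 (k + 2)
  have hY : 0 < Y := cfRec.den_pos fun t ht => by have := hr t (by omega); omega
  have hWY : Int.gcd W Y = 1 := Int.isCoprime_iff_gcd_eq_one.mp
    ⟨-cfRec (fun i => -r i) (-1) 0 (k + 1), cfRec (fun i => -r i) 0 1 (k + 1), by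
      linear_combination -cfRec.num_den_det (fun i => -r i) (k + 1)⟩
  have hpq : (p / q : ℚ) = W / Y := by
    rw [ncf_ofFn_eq k r hr, neg_div] at hval
    exact neg_inj.mp hval.symm
  constructor
  · rw [← Rat.num_div_eq_of_coprime hq hco, hpq, Rat.num_div_eq_of_coprime hY hWY]
  · rw [← Rat.den_div_eq_of_coprime hq hco, hpq, Rat.den_div_eq_of_coprime hY hWY]

theorem BezoutNext.unique_s11 {p q x y x' y' : ℤ} (h : BezoutNext p q x y) (h' : BezoutNext p q x' y') :
    x = x' ∧ y = y' := by
  obtain ⟨e, hx, hxp, hy, hyq⟩ := h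
  obtain ⟨e', hx', hxp', hy', hyq'⟩ := h'
  have hdvd : p ∣ x - x' :=
    (show IsCoprime p q from ⟨y, -x, by linear_combination e⟩).dvd_of_dvd_mul_left
      ⟨y - y', by linear_combination e' - e⟩
  obtain rfl : x = x' := by
    have := Int.eq_zero_of_abs_lt_dvd hdvd (abs_lt.mpr ⟨by linarith, by linarith⟩)
    linarith
  exact ⟨rfl, mul_left_cancel₀ (by linarith : p ≠ 0) (by linear_combination e - e')⟩

theorem bezoutNext_mul_sub {u₁ u₂ w₁ w₂ c : ℤ} (hdet : u₁ * w₂ - u₂ * w₁ = -1) (hw₁ : 0 ≤ w₁)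
    (hwu₁ : w₁ < u₁) (hu₂ : 0 ≤ u₂) (hwu₂ : w₂ < u₂) (hc : 1 ≤ c) :
    BezoutNext ((c + 1) * u₁ - w₁) ((c + 1) * u₂ - w₂) (c * u₁ - w₁) (c * u₂ - w₂) :=
  ⟨by linear_combination -hdet, by nlinarith, by linarith, by nlinarith, by linarith⟩

theorem cfRec.bezoutNext {a : ℕ → ℤ} {j : ℕ} (ha : ∀ t < j, 2 ≤ a t) {c : ℤ} (hc : 1 ≤ c) :
    BezoutNext ((c + 1) * cfRec a 0 1 (j + 1) - cfRec a 0 1 j)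
      ((c + 1) * cfRec a (-1) 0 (j + 1) - cfRec a (-1) 0 j)
      (c * cfRec a 0 1 (j + 1) - cfRec a 0 1 j)
      (c * cfRec a (-1) 0 (j + 1) - cfRec a (-1) 0 j) := by
  obtain ⟨hW₀, hW⟩ := cfRec.num_nonneg_and_lt_succ ha
  obtain ⟨hY₀, hY⟩ := cfRec.neg_one_le_den_and_lt_succ ha
  exact bezoutNext_mul_sub (cfRec.num_den_det a j) hW₀ hW (by omega) hY hc

theorem cfRec.bezoutNext_sub {a : ℕ → ℤ} {j : ℕ} (ha : ∀ t < j + 1, 2 ≤ a t) :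
    BezoutNext (cfRec a 0 1 (j + 2)) (cfRec a (-1) 0 (j + 2))
      (cfRec a 0 1 (j + 2) - cfRec a 0 1 (j + 1))
      (cfRec a (-1) 0 (j + 2) - cfRec a (-1) 0 (j + 1)) := by
  have h := cfRec.bezoutNext (j := j) (fun t ht => ha t (by omega)) (c := a j - 1)
    (by linarith [ha j (by omega)])
  rw [show cfRec a 0 1 (j + 2) = a j * cfRec a 0 1 (j + 1) - cfRec a 0 1 j from rfl,
    show cfRec a (-1) 0 (j + 2) = a j * cfRec a (-1) 0 (j + 1) - cfRec a (-1) 0 j from rfl]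
  convert h using 1 <;> ring

def bezoutDiffs (P : ℕ → ℤ × ℤ) (m : ℕ) : List ℤ :=
  (List.range' 1 m).map fun i => (P (i - 1)).1 - (P i).1

theorem bezoutDiffs_succ (P : ℕ → ℤ × ℤ) (n : ℕ) :
    bezoutDiffs P (n + 1) = ((P 0).1 - (P 1).1) :: bezoutDiffs (fun i => P (i + 1)) n := by
  simp only [bezoutDiffs, List.range'_succ, List.map_cons]
  rw [← List.map_add_range' (a := 1), List.map_map]
  refine congrArg _ (List.map_congr_left fun i hi => ?_)
  obtain ⟨hi, -⟩ := List.mem_range'_1.mp hi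
  simp only [Function.comp_apply, add_comm 1 i, Nat.add_sub_cancel, Nat.sub_add_cancel hi]

namespace IsBezoutChain

variable {x y : ℤ} {m : ℕ} {P : ℕ → ℤ × ℤ}

theorem eq_zero (h : IsBezoutChain 1 1 m P) : m = 0 := by
  by_contra hm
  exact h.2.2.1 0 (Nat.pos_of_ne_zero hm) h.1

theorem tail_s11 {x' y' : ℤ} (h : IsBezoutChain x y m P) (hxy : BezoutNext x y x' y') :
    ∃ n, m = n + 1 ∧ IsBezoutChain x' y' n (fun i => P (i + 1)) ∧
      bezoutDiffs P m = (x - x') :: bezoutDiffs (fun i => P (i + 1)) n := by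
  obtain ⟨h₀, hm, hne, hstep⟩ := h
  obtain ⟨n, rfl⟩ : ∃ n, m = n + 1 := by
    refine Nat.exists_eq_succ_of_ne_zero fun hm₀ => ?_
    subst hm₀
    have : x = 1 := congrArg Prod.fst (h₀.symm.trans hm)
    have := hxy.2.2.1
    have := hxy.2.1
    omega
  have h₁ := hstep 0 n.succ_pos
  rw [h₀] at h₁
  obtain ⟨hx', hy'⟩ := hxy.unique_s11 h₁
  refine ⟨n, rfl, ⟨Prod.ext hx'.symm hy'.symm, hm, fun i hi => hne _ (by omega),
    fun i hi => hstep _ (by omega)⟩, ?_⟩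
  rw [bezoutDiffs_succ, h₀, hx']

end IsBezoutChain

def cfDiffs (a : ℕ → ℤ) : ℕ → List ℤ
  | 0 => []
  | j + 1 => List.replicate (a j - 2).toNat (cfRec a 0 1 (j + 1)) ++ cfDiffs a j

theorem bezoutDiffs_of_chain_mul_sub {a : ℕ → ℤ} {j : ℕ} (ha : ∀ t < j, 2 ≤ a t) {L : List ℤ}
    (hbase : ∀ {m P}, IsBezoutChain (cfRec a 0 1 (j + 1) - cfRec a 0 1 j)
      (cfRec a (-1) 0 (j + 1) - cfRec a (-1) 0 j) m P → bezoutDiffs P m = L)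
    {c : ℤ} (hc : 1 ≤ c) {m : ℕ} {P : ℕ → ℤ × ℤ}
    (h : IsBezoutChain (c * cfRec a 0 1 (j + 1) - cfRec a 0 1 j)
      (c * cfRec a (-1) 0 (j + 1) - cfRec a (-1) 0 j) m P) :
    bezoutDiffs P m = List.replicate (c - 1).toNat (cfRec a 0 1 (j + 1)) ++ L := by
  induction c, hc using Int.leInduction generalizing m P with
  | base => simpa using hbase (by simpa using h)
  | succ c hc ih =>
    obtain ⟨n, rfl, h', hdiffs⟩ := h.tail_s11 (cfRec.bezoutNext ha hc)
    rw [hdiffs, ih h', show (c + 1 - 1).toNat = (c - 1).toNat + 1 by omega, List.replicate_succ]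
    congr 1
    ring

theorem bezoutDiffs_of_chain_cfRec {a : ℕ → ℤ} :
    ∀ {j : ℕ}, (∀ t < j, 2 ≤ a t) → ∀ {m : ℕ} {P : ℕ → ℤ × ℤ},
      IsBezoutChain (cfRec a 0 1 (j + 1) - cfRec a 0 1 j)
        (cfRec a (-1) 0 (j + 1) - cfRec a (-1) 0 j) m P → bezoutDiffs P m = cfDiffs a j
  | 0, _, m, P, h => by
    obtain rfl := IsBezoutChain.eq_zero (by simpa [cfRec] using h)
    rfl
  | j + 1, ha, m, P, h => by
    have hj := ha j (by omega)
    have h' : IsBezoutChain ((a j - 1) * cfRec a 0 1 (j + 1) - cfRec a 0 1 j)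
        ((a j - 1) * cfRec a (-1) 0 (j + 1) - cfRec a (-1) 0 j) m P := by
      convert h using 1 <;> simp only [cfRec] <;> ring
    rw [bezoutDiffs_of_chain_mul_sub (fun t ht => ha t (by omega))
      (bezoutDiffs_of_chain_cfRec fun t ht => ha t (by omega)) (by omega) h', cfDiffs,
      show a j - 1 - 1 = a j - 2 by ring]

def signedSums : List ℤ → Finset ℤ
  | [] => {0}
  | d :: l => (signedSums l).image (· + d) ∪ (signedSums l).image (· - d)

theorem coe_signedSums_map {ι : Type*} [DecidableEq ι] (d : ι → ℤ) {L : List ι} (hL : L.Nodup) :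
    (signedSums (L.map d) : Set ℤ) = {s | ∃ ε : ι → ℤ,
      (∀ i ∈ L.toFinset, ε i = 1 ∨ ε i = -1) ∧ s = ∑ i ∈ L.toFinset, ε i * d i} := by
  induction L with
  | nil => ext s; simp [signedSums]
  | cons j L ih =>
    obtain ⟨hj, hL⟩ := List.nodup_cons.mp hL
    have hjL : j ∉ L.toFinset := List.mem_toFinset.not.mpr hj
    have hsum (ε : ι → ℤ) (b : ℤ) :
        ∑ i ∈ L.toFinset, Function.update ε j b i * d i = ∑ i ∈ L.toFinset, ε i * d i :=
      Finset.sum_congr rfl fun i hi => by rw [Function.update_of_ne (ne_of_mem_of_not_mem hi hjL)]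
    have hsigns {ε : ι → ℤ} (hε : ∀ i ∈ L.toFinset, ε i = 1 ∨ ε i = -1) (b : ℤ) :
        ∀ i ∈ L.toFinset, Function.update ε j b i = 1 ∨ Function.update ε j b i = -1 :=
      fun i hi => by rw [Function.update_of_ne (ne_of_mem_of_not_mem hi hjL)]; exact hε i hi
    ext s
    simp only [List.map_cons, signedSums, Finset.coe_union, Finset.coe_image, ih hL,
      List.toFinset_cons, Finset.sum_insert hjL, Finset.forall_mem_insert]
    constructor
    · rintro (⟨_, ⟨ε, hε, rfl⟩, rfl⟩ | ⟨_, ⟨ε, hε, rfl⟩, rfl⟩)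
      · exact ⟨Function.update ε j 1, ⟨by simp, hsigns hε 1⟩, by simp [hsum, add_comm]⟩
      · exact ⟨Function.update ε j (-1), ⟨by simp, hsigns hε (-1)⟩, by simp [hsum]; ring⟩
    · rintro ⟨ε, ⟨hεj | hεj, hε⟩, rfl⟩
      · exact Or.inl ⟨_, ⟨ε, hε, rfl⟩, by rw [hεj]; ring⟩
      · exact Or.inr ⟨_, ⟨ε, hε, rfl⟩, by rw [hεj]; ring⟩

theorem abs_le_sum_of_mem_signedSums {l : List ℤ} (hl : ∀ y ∈ l, 0 ≤ y) {x : ℤ}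
    (hx : x ∈ signedSums l) : |x| ≤ l.sum := by
  induction l generalizing x with
  | nil => simp_all [signedSums]
  | cons d l ih =>
    simp only [List.forall_mem_cons] at hl
    simp only [signedSums, Finset.mem_union, Finset.mem_image] at hx
    rw [List.sum_cons]
    rcases hx with ⟨y, hy, rfl⟩ | ⟨y, hy, rfl⟩ <;>
    · have := ih hl.2 hy
      rw [abs_le] at this ⊢
      constructor <;> linarith [hl.1]

theorem signedSums_replicate_append (D : ℤ) (l : List ℤ) (c : ℕ) :
    signedSums (List.replicate c D ++ l)
      = (Finset.range (c + 1) ×ˢ signedSums l).image fun p => (2 * p.1 - c) * D + p.2 := by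
  induction c with
  | zero => ext; simp
  | succ c ih =>
    ext x
    simp only [List.replicate_succ, List.cons_append, signedSums, ih, Finset.mem_union,
      Finset.mem_image, Finset.mem_product, Finset.mem_range, Prod.exists]
    constructor
    · rintro (⟨_, ⟨i, t, ⟨hi, ht⟩, rfl⟩, rfl⟩ | ⟨_, ⟨i, t, ⟨hi, ht⟩, rfl⟩, rfl⟩)
      · exact ⟨i + 1, t, ⟨by omega, ht⟩, by push_cast; ring⟩
      · exact ⟨i, t, ⟨by omega, ht⟩, by push_cast; ring⟩
    · rintro ⟨_ | i, t, ⟨hi, ht⟩, rfl⟩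
      · exact Or.inr ⟨_, ⟨0, t, ⟨by omega, ht⟩, rfl⟩, by push_cast; ring⟩
      · exact Or.inl ⟨_, ⟨i, t, ⟨by omega, ht⟩, rfl⟩, by push_cast; ring⟩

theorem card_signedSums_replicate_append {D : ℤ} {l : List ℤ} (hl : ∀ y ∈ l, 0 ≤ y)
    (hD : l.sum < D) (c : ℕ) :
    (signedSums (List.replicate c D ++ l)).card = (c + 1) * (signedSums l).card := by
  rw [signedSums_replicate_append, Finset.card_image_of_injOn, Finset.card_product,
    Finset.card_range]
  rintro ⟨i, t⟩ hit ⟨i', t'⟩ hit' he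
  simp only [Finset.coe_product, Set.mem_prod, Finset.coe_range, Set.mem_Iio, Finset.mem_coe]
    at hit hit' he
  have ht := abs_lt.mp ((abs_le_sum_of_mem_signedSums hl hit.2).trans_lt hD)
  have ht' := abs_lt.mp ((abs_le_sum_of_mem_signedSums hl hit'.2).trans_lt hD)
  have hii' : ((i : ℤ) - i') * (2 * D) = t' - t := by linear_combination he
  obtain rfl : i = i' := by
    rcases lt_trichotomy (i : ℤ) i' with h | h | h
    · nlinarith
    · exact_mod_cast h
    · nlinarith
  simp only [Prod.mk.injEq, true_and]
  linarith

namespace cfDiffs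

variable {a : ℕ → ℤ}

theorem nonneg {j : ℕ} (ha : ∀ t < j, 2 ≤ a t) : ∀ y ∈ cfDiffs a j, 0 ≤ y := by
  induction j with
  | zero => simp [cfDiffs]
  | succ j ih =>
    simp only [cfDiffs, List.mem_append, List.mem_replicate]
    rintro y (⟨-, rfl⟩ | hy)
    · exact (cfRec.num_pos fun t ht => ha t (by omega)).le
    · exact ih (fun t ht => ha t (by omega)) y hy

theorem sum_eq {j : ℕ} (ha : ∀ t < j, 2 ≤ a t) :
    (cfDiffs a j).sum = cfRec a 0 1 (j + 1) - cfRec a 0 1 j - 1 := by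
  induction j with
  | zero => rfl
  | succ j ih =>
    have hj := ha j (by omega)
    rw [cfDiffs, List.sum_append, List.sum_replicate, ih fun t ht => ha t (by omega), nsmul_eq_mul,
      Int.toNat_of_nonneg (by omega)]
    show _ = a j * _ - _ - _ - _
    ring

theorem card_signedSums {j : ℕ} (ha : ∀ t < j, 2 ≤ a t) :
    (signedSums (cfDiffs a j)).card = ∏ t ∈ Finset.range j, (a t - 1).toNat := by
  induction j with
  | zero => rfl
  | succ j ih =>
    have ha' : ∀ t < j, 2 ≤ a t := fun t ht => ha t (by omega)
    have hsum : (cfDiffs a j).sum < cfRec a 0 1 (j + 1) := by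
      rw [sum_eq ha']
      linarith [(cfRec.num_nonneg_and_lt_succ ha').1]
    rw [cfDiffs, card_signedSums_replicate_append (nonneg ha') hsum, ih ha',
      Finset.prod_range_succ, mul_comm]
    congr 1
    have := ha j (by omega)
    omega

end cfDiffs

theorem stmt11_general (p q : ℤ) (hq : 0 < q) (hco : Int.gcd p q = 1)
    (k : ℕ) (r : ℕ → ℤ) (hr : ∀ i ≤ k, r i ≤ -2)
    (hval : ncf (List.ofFn fun i : Fin (k + 1) => r i.1) = -(p : ℚ) / (q : ℚ))
    (p' q' : ℤ) (hb : BezoutNext p q p' q')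
    (m : ℕ) (P' : ℕ → ℤ × ℤ) (hchain : IsBezoutChain p' q' m P')
    (d' : ℕ → ℤ) (hd' : ∀ i, 1 ≤ i → i ≤ m → d' i = (P' (i - 1)).1 - (P' i).1) :
    Set.ncard {s : ℤ | ∃ ε : ℕ → ℤ,
        (∀ i ∈ Finset.Icc 1 m, ε i = 1 ∨ ε i = -1) ∧
        s = ∑ i ∈ Finset.Icc 1 m, ε i * d' i}
      = (∏ i ∈ Finset.range (k + 1), (r i + 1)).natAbs := by
  set a : ℕ → ℤ := fun i => -r i
  have ha : ∀ t < k + 1, 2 ≤ a t := fun t ht => by have := hr t (by omega); simp only [a]; omega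
  obtain ⟨rfl, rfl⟩ := eq_cfRec_of_ncf_eq hr hq hco hval
  obtain ⟨rfl, rfl⟩ := hb.unique_s11 (cfRec.bezoutNext_sub ha)
  have hdiffs : (List.range' 1 m).map d' = cfDiffs a (k + 1) := by
    rw [← bezoutDiffs_of_chain_cfRec ha hchain]
    refine List.map_congr_left fun i hi => ?_
    obtain ⟨h₁, h₂⟩ := List.mem_range'_1.mp hi
    exact hd' i h₁ (by omega)
  have hIcc : (List.range' 1 m).toFinset = Finset.Icc 1 m := by ext; simp; omega
  rw [← hIcc, ← coe_signedSums_map d' List.nodup_range', hdiffs, Set.ncard_coe_finset,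
    cfDiffs.card_signedSums ha, ← Int.natAbsHom_apply, map_prod]
  refine Finset.prod_congr rfl fun i hi => ?_
  have := hr i (Nat.lt_succ_iff.mp (Finset.mem_range.mp hi))
  simp only [Int.natAbsHom_apply, a]
  omega

/-- Let `[r₀, …, r_k]⁻ = −p/q` with all `rᵢ ≤ −2`, let `(p′, q′)` be the Bezout
successor of `(p, q)`, let `m` be the length of the Bezout chain of `(p′, q′)`
(`m = 0` when `(p′, q′) = (1, 1)`), and let `d′ᵢ = p′_{i−1} − p′ᵢ` be the
differences of first coordinates along that chain.  Then the number of distinct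
integers of the form `Σ_{i=1}^{m} εᵢ d′ᵢ`, over all sign choices
`ε : {1, …, m} → {±1}` (this number being `1` when `m = 0`), equals
`|(r₀ + 1)(r₁ + 1) ⋯ (r_k + 1)|`. -/
theorem stmt11 (p q : ℤ) (hq : 0 < q) (hqp : q < p) (hco : Int.gcd p q = 1)
    (k : ℕ) (r : ℕ → ℤ) (hr : ∀ i ≤ k, r i ≤ -2)
    (hval : ncf (List.ofFn fun i : Fin (k + 1) => r i.1) = -(p : ℚ) / (q : ℚ))
    (p' q' : ℤ) (hb : BezoutNext p q p' q')
    (m : ℕ) (P' : ℕ → ℤ × ℤ) (hchain : IsBezoutChain p' q' m P')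
    (d' : ℕ → ℤ) (hd' : ∀ i, 1 ≤ i → i ≤ m → d' i = (P' (i - 1)).1 - (P' i).1) :
    Set.ncard {s : ℤ | ∃ ε : ℕ → ℤ,
        (∀ i ∈ Finset.Icc 1 m, ε i = 1 ∨ ε i = -1) ∧
        s = ∑ i ∈ Finset.Icc 1 m, ε i * d' i}
      = (∏ i ∈ Finset.range (k + 1), (r i + 1)).natAbs :=
  stmt11_general p q hq hco k r hr hval p' q' hb m P' hchain d' hd'
end
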